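/- arXiv:1312.6643 — 2 statements merged into one kernel-verified Lean document; each statement's English description precedes it below -/
import Mathlib

section
/- Let A ∈ Sⁿ be a symmetric matrix whose support graph G(A) is an n-cycle (n ≥ 5). Then A is completely positive semidefinite if and only if A is completely positive. -/
open Matrix

def CompletelyPSD {n : ℕ} (A : Matrix (Fin n) (Fin n) ℝ) : Prop :=
  ∃ (d : ℕ) (X : Fin n → Matrix (Fin d) (Fin d) ℝ),
    1 ≤ d ∧ (∀ i, (X i).PosSemidef) ∧ ∀ i j, A i j = ((X i) * (X j)).trace

def CompletelyPositive {n : ℕ} (A : Matrix (Fin n) (Fin n) ℝ) : Prop :=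
  ∃ (d : ℕ) (x : Fin n → Fin d → ℝ),
    1 ≤ d ∧ (∀ i k, 0 ≤ x i k) ∧ ∀ i j, A i j = ∑ k, x i k * x j k

/-!
Write `A i j = tr (X i X j)` with `X i ⪰ 0`, and let `P i` be the range projection of `X i`.
For psd matrices `tr (X i X j) = 0` forces `X i X j = 0`, hence `P i P j = 0`; on a cycle of
length at least 4 this applies to the two neighbours `i - 1`, `i + 1` of every vertex `i`.
Put `p i = tr (X i² P (i+1))` and `q i = tr (X (i+1)² P i)`. Since
`tr (X i X (i+1)) = tr ((X i P (i+1)) (X (i+1) P i))`, Cauchy–Schwarz for the trace form gives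
`A i (i+1)² ≤ p i q i`, and `P (i-1) + P (i+1) ≤ 1` gives `p i + q (i-1) ≤ A i i`.
So every edge weight splits as `A i (i+1) = s i t i` with `s, t ≥ 0` and
`s i² + t (i-1)² ≤ A i i`, and `A` is the Gram matrix of the nonnegative vectors
`r i e_i ⊕ (s i e_i + t (i-1) e_(i-1))`, where `r i` takes up the slack on the diagonal.
Conversely, nonnegative vectors `x i` give `X i = diag (x i)`.
-/

namespace CompletelyPositive

variable {n : ℕ} {A : Matrix (Fin n) (Fin n) ℝ}

theorem of_dotProduct {ι : Type*} [Fintype ι] [Nonempty ι] (x : Fin n → ι → ℝ)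
    (hx : ∀ i k, 0 ≤ x i k) (hA : ∀ i j, A i j = x i ⬝ᵥ x j) : CompletelyPositive A := by
  let e := Fintype.equivFin ι
  refine ⟨Fintype.card ι, fun i k => x i (e.symm k), Fintype.card_pos, fun i k => hx i _,
    fun i j => ?_⟩
  rw [hA, dotProduct]
  exact Fintype.sum_equiv e _ _ fun k => by simp

theorem submatrix {m : ℕ} (hA : CompletelyPositive A) (f : Fin m → Fin n) :
    CompletelyPositive (A.submatrix f f) := by
  obtain ⟨d, x, hd, hx, hA⟩ := hA
  exact ⟨d, x ∘ f, hd, fun i k => hx _ k, fun i j => hA _ _⟩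

theorem completelyPSD (hA : CompletelyPositive A) : CompletelyPSD A := by
  obtain ⟨d, x, hd, hx, hA⟩ := hA
  refine ⟨d, fun i => diagonal (x i), hd, fun i => posSemidef_diagonal_iff.mpr (hx i),
    fun i j => ?_⟩
  rw [diagonal_mul_diagonal, trace_diagonal, hA]

end CompletelyPositive

theorem CompletelyPSD.submatrix {n m : ℕ} {A : Matrix (Fin n) (Fin n) ℝ} (hA : CompletelyPSD A)
    (f : Fin m → Fin n) : CompletelyPSD (A.submatrix f f) := by
  obtain ⟨d, X, hd, hX, hA⟩ := hA
  exact ⟨d, X ∘ f, hd, fun i => hX _, fun i j => hA _ _⟩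

theorem exists_mul_eq_of_sq_le_mul {a p q : ℝ} (ha : 0 ≤ a) (hp : 0 ≤ p) (hq : 0 ≤ q)
    (h : a ^ 2 ≤ p * q) : ∃ s t, 0 ≤ s ∧ 0 ≤ t ∧ s * t = a ∧ s ^ 2 ≤ p ∧ t ^ 2 ≤ q := by
  rcases hp.eq_or_lt with rfl | hp
  · obtain rfl : a = 0 := by nlinarith
    exact ⟨0, 0, le_rfl, le_rfl, mul_zero 0, by simp, by simpa using hq⟩
  have hsp : √p ≠ 0 := (Real.sqrt_pos.mpr hp).ne'
  refine ⟨√p, a / √p, Real.sqrt_nonneg p, by positivity, by field_simp, (Real.sq_sqrt hp.le).le, ?_⟩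
  rw [div_pow, Real.sq_sqrt hp.le, div_le_iff₀ hp]
  linarith

namespace Fin

variable {n : ℕ} [NeZero n] (i : Fin n)

theorem add_one_ne_self (hn : 2 ≤ n) : i + 1 ≠ i := by
  obtain ⟨m, rfl⟩ : ∃ m, n = m + 2 := ⟨n - 2, by omega⟩
  simp

theorem sub_one_ne_self (hn : 2 ≤ n) : i - 1 ≠ i := by
  rw [ne_eq, sub_eq_iff_eq_add, eq_comm]
  exact add_one_ne_self i hn

theorem add_one_ne_sub_one (hn : 3 ≤ n) : i + 1 ≠ i - 1 := by
  obtain ⟨m, rfl⟩ : ∃ m, n = m + 3 := ⟨n - 3, by omega⟩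
  rw [ne_eq, eq_sub_iff_add_eq, add_assoc, add_eq_left]
  simp [Fin.ext_iff, Fin.val_add, Nat.mod_eq_of_lt]

theorem add_one_ne_sub_one_sub_one (hn : 4 ≤ n) : i + 1 ≠ i - 1 - 1 := by
  obtain ⟨m, rfl⟩ : ∃ m, n = m + 4 := ⟨n - 4, by omega⟩
  rw [ne_eq, eq_sub_iff_add_eq, eq_sub_iff_add_eq, add_assoc, add_assoc, add_eq_left]
  simp [Fin.ext_iff, Fin.val_add, Nat.mod_eq_of_lt]

end Fin

namespace Matrix

open scoped ComplexOrder MatrixOrder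

variable {m 𝕜 : Type*} [Fintype m] [RCLike 𝕜]

theorem trace_conjTranspose_mul_self_mul_conjTranspose_mul_self (B C : Matrix m m 𝕜) :
    (Bᴴ * B * (Cᴴ * C)).trace = (C * Bᴴ * (C * Bᴴ)ᴴ).trace := by
  rw [← Matrix.mul_assoc, trace_mul_comm, conjTranspose_mul, conjTranspose_conjTranspose]
  simp only [Matrix.mul_assoc]

theorem PosSemidef.trace_mul_nonneg {X Y : Matrix m m 𝕜} (hX : X.PosSemidef)
    (hY : Y.PosSemidef) : 0 ≤ (X * Y).trace := by
  classical
  obtain ⟨B, rfl⟩ := CStarAlgebra.nonneg_iff_eq_star_mul_self.mp hX.nonneg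
  obtain ⟨C, rfl⟩ := CStarAlgebra.nonneg_iff_eq_star_mul_self.mp hY.nonneg
  simp only [star_eq_conjTranspose]
  rw [trace_conjTranspose_mul_self_mul_conjTranspose_mul_self]
  exact (posSemidef_self_mul_conjTranspose _).trace_nonneg

theorem PosSemidef.trace_mul_eq_zero_iff {X Y : Matrix m m 𝕜} (hX : X.PosSemidef)
    (hY : Y.PosSemidef) : (X * Y).trace = 0 ↔ X * Y = 0 := by
  classical
  refine ⟨fun h => ?_, fun h => by rw [h, trace_zero]⟩
  obtain ⟨B, rfl⟩ := CStarAlgebra.nonneg_iff_eq_star_mul_self.mp hX.nonneg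
  obtain ⟨C, rfl⟩ := CStarAlgebra.nonneg_iff_eq_star_mul_self.mp hY.nonneg
  simp only [star_eq_conjTranspose] at h ⊢
  rw [trace_conjTranspose_mul_self_mul_conjTranspose_mul_self,
    trace_mul_conjTranspose_self_eq_zero_iff] at h
  calc Bᴴ * B * (Cᴴ * C) = Bᴴ * (C * Bᴴ)ᴴ * C := by
        simp only [conjTranspose_mul, conjTranspose_conjTranspose, Matrix.mul_assoc]
    _ = 0 := by rw [h, conjTranspose_zero, Matrix.mul_zero, Matrix.zero_mul]

theorem IsStarProjection.trace_conjTranspose_mul_self_mul {R : Matrix m m 𝕜}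
    (hR : IsStarProjection R) (M : Matrix m m 𝕜) :
    ((M * R)ᴴ * (M * R)).trace = (Mᴴ * M * R).trace := by
  rw [conjTranspose_mul, ← star_eq_conjTranspose R, hR.isSelfAdjoint.star_eq, Matrix.mul_assoc,
    trace_mul_comm, Matrix.mul_assoc, Matrix.mul_assoc, hR.isIdempotentElem.eq, Matrix.mul_assoc]

theorem IsStarProjection.trace_conjTranspose_mul_self_mul_nonneg {R : Matrix m m 𝕜}
    (hR : IsStarProjection R) (M : Matrix m m 𝕜) : 0 ≤ (Mᴴ * M * R).trace := by
  rw [← hR.trace_conjTranspose_mul_self_mul]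
  exact (posSemidef_conjTranspose_mul_self _).trace_nonneg

theorem IsStarProjection.trace_add_trace_le [DecidableEq m] {P Q : Matrix m m 𝕜}
    (hP : IsStarProjection P) (hQ : IsStarProjection Q) (hPQ : P * Q = 0) (M : Matrix m m 𝕜) :
    (Mᴴ * M * P).trace + (Mᴴ * M * Q).trace ≤ (Mᴴ * M).trace := by
  have hR : IsStarProjection (1 - (P + Q)) := (hP.add hQ hPQ).one_sub
  have := hR.trace_conjTranspose_mul_self_mul_nonneg M
  rw [Matrix.mul_sub, Matrix.mul_one, Matrix.mul_add, trace_sub, trace_add] at this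
  exact sub_nonneg.mp this

theorem IsHermitian.exists_isStarProjection_mul_eq_self [DecidableEq m] {X : Matrix m m 𝕜}
    (hX : X.IsHermitian) :
    ∃ P, IsStarProjection P ∧ P * X = X ∧ ∀ Z, X * Z = 0 → P * Z = 0 := by
  set φ := Unitary.conjStarAlgAut 𝕜 (Matrix m m 𝕜) hX.eigenvectorUnitary
  set d : m → 𝕜 := RCLike.ofReal ∘ hX.eigenvalues
  have hXd : X = φ (diagonal d) := hX.spectral_theorem
  have hWX : φ (diagonal d⁻¹) * X = φ (diagonal (d⁻¹ * d)) := by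
    rw [hXd, ← map_mul, diagonal_mul_diagonal]
    rfl
  refine ⟨φ (diagonal (d⁻¹ * d)), .map ?_ φ, ?_,
    fun Z hZ => by rw [← hWX, Matrix.mul_assoc, hZ, Matrix.mul_zero]⟩
  · rw [isStarProjection_iff', diagonal_mul_diagonal, star_eq_conjTranspose, diagonal_conjTranspose]
    constructor <;> congr 1 <;> funext k
    · rcases eq_or_ne (d k) 0 with h | h <;> simp [h]
    · simp [d]
  · rw [hXd, ← map_mul, diagonal_mul_diagonal]
    congr 2
    funext k
    exact inv_mul_mul_self (d k)

theorem trace_mul_sq_le {l : Type*} [Fintype l] (M : Matrix l m ℝ) (N : Matrix m l ℝ) :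
    (M * N).trace ^ 2 ≤ (Mᴴ * M).trace * (Nᴴ * N).trace := by
  have h1 : (M * N).trace = ∑ p : l × m, M p.1 p.2 * N p.2 p.1 := by
    simp [trace, mul_apply, Fintype.sum_prod_type]
  have h2 : (Mᴴ * M).trace = ∑ p : l × m, M p.1 p.2 ^ 2 := by
    simp only [trace, conjTranspose_eq_transpose_of_trivial, diag_apply, mul_apply,
      transpose_apply, sq, Fintype.sum_prod_type]
    exact Finset.sum_comm
  have h3 : (Nᴴ * N).trace = ∑ p : l × m, N p.2 p.1 ^ 2 := by
    simp [trace, mul_apply, Fintype.sum_prod_type, sq]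
  rw [h1, h2, h3]
  exact Finset.sum_mul_sq_le_sq_mul_sq _ _ _

theorem IsHermitian.trace_mul_sq_le_of_isStarProjection {Y Z P Q : Matrix m m ℝ}
    (hY : Y.IsHermitian) (hZ : Z.IsHermitian) (hP : IsStarProjection P)
    (hQ : IsStarProjection Q) (hPY : P * Y = Y) (hQZ : Q * Z = Z) :
    (Y * Z).trace ^ 2 ≤ (Y * Y * Q).trace * (Z * Z * P).trace := by
  have hYZ : (Y * Z).trace = (Y * Q * (Z * P)).trace := by
    rw [← Matrix.mul_assoc, Matrix.mul_assoc Y Q Z, hQZ, trace_mul_comm (Y * Z),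
      ← Matrix.mul_assoc, hPY]
  calc (Y * Z).trace ^ 2 = (Y * Q * (Z * P)).trace ^ 2 := by rw [hYZ]
    _ ≤ ((Y * Q)ᴴ * (Y * Q)).trace * ((Z * P)ᴴ * (Z * P)).trace := trace_mul_sq_le _ _
    _ = (Y * Y * Q).trace * (Z * Z * P).trace := by
      rw [hQ.trace_conjTranspose_mul_self_mul, hP.trace_conjTranspose_mul_self_mul, hY.eq, hZ.eq]

def SupportedOnCycle {n : ℕ} [NeZero n] {R : Type*} [Zero R]
    (A : Matrix (Fin n) (Fin n) R) : Prop :=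
  ∀ i j, j ≠ i → j ≠ i + 1 → j ≠ i - 1 → A i j = 0

end Matrix

theorem Matrix.SupportedOnCycle.completelyPositive_of_factors {n : ℕ} [NeZero n] (hn : 3 ≤ n)
    {A : Matrix (Fin n) (Fin n) ℝ} (hA : A.SupportedOnCycle) (hsymm : A.IsSymm)
    (s t : Fin n → ℝ) (hs : ∀ i, 0 ≤ s i) (ht : ∀ i, 0 ≤ t i)
    (hedge : ∀ i, A i (i + 1) = s i * t i) (hdiag : ∀ i, s i ^ 2 + t (i - 1) ^ 2 ≤ A i i) :
    CompletelyPositive A := by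
  set r : Fin n → ℝ := fun i => √(A i i - s i ^ 2 - t (i - 1) ^ 2)
  have hr : ∀ i, r i ^ 2 = A i i - s i ^ 2 - t (i - 1) ^ 2 := fun i =>
    Real.sq_sqrt (by linarith [hdiag i])
  let w : Fin n → Fin n → ℝ := fun i => Pi.single i (s i) + Pi.single (i - 1) (t (i - 1))
  refine .of_dotProduct (ι := Fin n ⊕ Fin n) (fun i => Sum.elim (Pi.single i (r i)) (w i))
    (fun i k => ?_) (fun i j => ?_)
  · have hr0 : ∀ i, 0 ≤ r i := fun i => Real.sqrt_nonneg _
    rcases k with k | k <;>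
      simp only [Sum.elim_inl, Sum.elim_inr, w, Pi.add_apply, Pi.single_apply]
    · split_ifs <;> simp [hr0]
    · split_ifs <;> simp [hs, ht, add_nonneg]
  · simp only [sumElim_dotProduct_sumElim, single_dotProduct, w, add_dotProduct, Pi.add_apply,
      Pi.single_apply]
    have h1 : i + 1 ≠ i := Fin.add_one_ne_self i (by omega)
    have h2 : i - 1 ≠ i := Fin.sub_one_ne_self i (by omega)
    have h3 : i + 1 ≠ i - 1 := Fin.add_one_ne_sub_one i hn
    by_cases hj : j = i
    · subst hj
      simp only [↓reduceIte, h2.symm, add_zero, h2, zero_add]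
      linear_combination -(hr j)
    by_cases hj1 : j = i + 1
    · subst hj1
      simp only [h1.symm, ↓reduceIte, mul_zero, add_sub_cancel_right, zero_add, h3.symm, h2,
        add_zero]
      exact hedge i
    by_cases hj2 : j = i - 1
    · subst hj2
      simp only [h2.symm, ↓reduceIte, mul_zero, eq_sub_iff_add_eq, h3, add_zero, sub_add_cancel,
        zero_add]
      rw [hsymm.apply, mul_comm, ← hedge, sub_add_cancel]
    simpa only [Ne.symm hj, ↓reduceIte, mul_zero, eq_sub_iff_add_eq, Ne.symm hj1, add_zero,
      Ne.symm hj2, sub_add_cancel] using hA i j hj hj1 hj2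

theorem exists_edge_bounds_of_supportedOnCycle {n : ℕ} [NeZero n] (hn : 4 ≤ n) {m : Type*}
    [Fintype m] [DecidableEq m] (Y : Fin n → Matrix m m ℝ) (hY : ∀ i, (Y i).PosSemidef)
    (hsupp : (of fun i j => (Y i * Y j).trace).SupportedOnCycle) :
    ∃ p q : Fin n → ℝ, (∀ i, 0 ≤ p i) ∧ (∀ i, 0 ≤ q i) ∧
      (∀ i, (Y i * Y (i + 1)).trace ^ 2 ≤ p i * q i) ∧
      ∀ i, p i + q (i - 1) ≤ (Y i * Y i).trace := by
  choose P hP hPY hPker using fun i => (hY i).isHermitian.exists_isStarProjection_mul_eq_self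
  have hYY : ∀ i, Y i * Y i = (Y i)ᴴ * Y i := fun i => by rw [(hY i).isHermitian.eq]
  have horth : ∀ i, P (i + 1) * P (i - 1) = 0 := by
    intro i
    have hzero : Y (i - 1) * Y (i + 1) = 0 :=
      ((hY _).trace_mul_eq_zero_iff (hY _)).mp <| hsupp (i - 1) (i + 1)
        (Fin.add_one_ne_sub_one i (by omega))
        (by rw [sub_add_cancel]; exact Fin.add_one_ne_self i (by omega))
        (Fin.add_one_ne_sub_one_sub_one i hn)
    have h : Y (i + 1) * P (i - 1) = 0 := by
      have := congrArg star (hPker _ _ hzero)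
      rwa [star_mul, star_zero, (hP _).isSelfAdjoint.star_eq, star_eq_conjTranspose,
        (hY _).isHermitian.eq] at this
    exact hPker _ _ h
  refine ⟨fun i => (Y i * Y i * P (i + 1)).trace, fun i => (Y (i + 1) * Y (i + 1) * P i).trace,
    fun i => ?_, fun i => ?_, fun i => ?_, fun i => ?_⟩
  · dsimp only
    rw [hYY]
    exact (hP _).trace_conjTranspose_mul_self_mul_nonneg _
  · dsimp only
    rw [hYY]
    exact (hP _).trace_conjTranspose_mul_self_mul_nonneg _
  · exact (hY i).isHermitian.trace_mul_sq_le_of_isStarProjection (hY _).isHermitian (hP i)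
      (hP _) (hPY i) (hPY _)
  · simp only [sub_add_cancel, hYY]
    exact (hP _).trace_add_trace_le (hP _) (horth i) _

theorem CompletelyPSD.completelyPositive_of_supportedOnCycle {n : ℕ} [NeZero n] (hn : 4 ≤ n)
    {A : Matrix (Fin n) (Fin n) ℝ} (hA : CompletelyPSD A) (hsupp : A.SupportedOnCycle) :
    CompletelyPositive A := by
  obtain ⟨d, X, -, hX, hAX⟩ := hA
  obtain rfl : A = of fun i j => (X i * X j).trace := ext hAX
  obtain ⟨p, q, hp, hq, hpq, hdiag⟩ := exists_edge_bounds_of_supportedOnCycle hn X hX hsupp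
  choose s t hs ht hst hsp htq using fun i =>
    exists_mul_eq_of_sq_le_mul ((hX i).trace_mul_nonneg (hX _)) (hp i) (hq i) (hpq i)
  exact hsupp.completelyPositive_of_factors (by omega) (.ext fun i j => trace_mul_comm (X j) (X i))
    s t hs ht (fun i => (hst i).symm) fun i => by
      simp only [of_apply]
      linarith [hsp i, htq (i - 1), hdiag i]

theorem cycle_csplus_iff_cp_general {n : ℕ} [NeZero n] (hn : 5 ≤ n)
    (A : Matrix (Fin n) (Fin n) ℝ)
    (hcyc : ∃ e : Fin n ≃ Fin n,
      ∀ i j, i ≠ j → (A i j ≠ 0 ↔ (e j = e i + 1 ∨ e i = e j + 1))) :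
    CompletelyPSD A ↔ CompletelyPositive A := by
  obtain ⟨e, he⟩ := hcyc
  have hsupp : (A.submatrix e.symm e.symm).SupportedOnCycle := by
    intro i j hji hj1 hj2
    by_contra hne
    have hadj := (he _ _ (e.symm.injective.ne (Ne.symm hji))).mp hne
    simp only [Equiv.apply_symm_apply] at hadj
    exact hadj.elim hj1 fun h => hj2 (eq_sub_of_add_eq h.symm)
  refine ⟨fun h => ?_, CompletelyPositive.completelyPSD⟩
  simpa [submatrix_submatrix] using
    ((h.submatrix e.symm).completelyPositive_of_supportedOnCycle (by omega) hsupp).submatrix e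

/-- If `A` is symmetric and its support graph is an `n`-cycle (`n ≥ 5`),
then `A` is completely psd iff `A` is completely positive. -/
theorem cycle_csplus_iff_cp {n : ℕ} [NeZero n] (hn : 5 ≤ n)
    (A : Matrix (Fin n) (Fin n) ℝ) (hsym : A.IsSymm)
    (hcyc : ∃ e : Fin n ≃ Fin n,
      ∀ i j, i ≠ j → (A i j ≠ 0 ↔ (e j = e i + 1 ∨ e i = e j + 1))) :
    CompletelyPSD A ↔ CompletelyPositive A :=
  cycle_csplus_iff_cp_general hn A hcyc
end

section
/- The matrix L' = L + cos²(2π/5)·(F¹³ + F²⁴ + F³⁵ + F¹⁴ + F²⁵), where L = M(cos²(4π/5), cos²(2π/5)) and F^{ij} ∈ S⁵₊ has F^{ij}_{ii} = F^{ij}_{jj} = 1, F^{ij}_{ij} = F^{ij}_{ji} = −1 and all other entries 0, satisfies ⟨H, L'⟩ = 5(2−√5)/2 < 0 for the Horn matrix H = M(−1,1); consequently L' is not completely positive, even though L is completely positive semidefinite and every partial sum in the definition of L' is entrywise nonnegative. -/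
open Matrix Real

def Mcirc (b c : ℝ) : Matrix (Fin 5) (Fin 5) ℝ :=
  Matrix.of fun i j =>
    if i = j then 1 else if i - j = (1 : Fin 5) ∨ i - j = (4 : Fin 5) then b else c

/-- The psd matrix `F^{ij}` with entries `1` at `(i,i)`, `(j,j)`, `−1` at `(i,j)`, `(j,i)`,
and `0` elsewhere. -/
def Fm (i j : Fin 5) : Matrix (Fin 5) (Fin 5) ℝ :=
  Matrix.of fun a b =>
    if (a = i ∧ b = i) ∨ (a = j ∧ b = j) then 1
    else if (a = i ∧ b = j) ∨ (a = j ∧ b = i) then -1 else 0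

noncomputable def Lmat : Matrix (Fin 5) (Fin 5) ℝ :=
  Mcirc (Real.cos (4 * π / 5) ^ 2) (Real.cos (2 * π / 5) ^ 2)

noncomputable def cc : ℝ := Real.cos (2 * π / 5) ^ 2

/-- `L' = L + cos²(2π/5)(F¹³ + F²⁴ + F³⁵ + F¹⁴ + F²⁵)` (indices 1..5, here 0..4). -/
noncomputable def Lmat' : Matrix (Fin 5) (Fin 5) ℝ :=
  Lmat + cc • (Fm 0 2 + Fm 1 3 + Fm 2 4 + Fm 0 3 + Fm 1 4)

/-!
`L'` pairs negatively with the Horn matrix `H`: each `F^{ij}` is `(eᵢ - eⱼ)(eᵢ - eⱼ)ᵀ` on a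
non-edge of the 5-cycle, where `H` has `+1` entries, so `⟨H, F^{ij}⟩ = 0` and
`⟨H, L'⟩ = ⟨H, L⟩ = 5(1 - 2cos²(4π/5) + 2cos²(2π/5)) = 5(2 - √5)/2`. Since `H` is copositive,
`⟨H, xxᵀ⟩ ≥ 0` for every `x ≥ 0`, so `⟨H, A⟩ ≥ 0` for every completely positive `A`.
The matrix `L` is completely positive semidefinite as the Gram matrix `⟨uᵢuᵢᵀ, uⱼuⱼᵀ⟩ = (uᵢ ⬝ uⱼ)²`
of the unit vectors `uᵢ` at angles `4πi/5`. The partial sums are entrywise nonnegative because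
every entry of `L` is at least `cos²(2π/5)` and no entry of a partial sum of the `F^{ij}` is
below `-1`.
-/

def Copositive {n : ℕ} (H : Matrix (Fin n) (Fin n) ℝ) : Prop :=
  ∀ v : Fin n → ℝ, (∀ i, 0 ≤ v i) → 0 ≤ ∑ a, ∑ b, H a b * (v a * v b)

theorem CompletelyPositive.sum_mul_nonneg {n : ℕ} {A H : Matrix (Fin n) (Fin n) ℝ}
    (hA : CompletelyPositive A) (hH : Copositive H) : 0 ≤ ∑ a, ∑ b, H a b * A a b := by
  obtain ⟨d, x, -, hx, hA⟩ := hA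
  calc 0 ≤ ∑ k, ∑ a, ∑ b, H a b * (x a k * x b k) :=
        Finset.sum_nonneg fun k _ => hH (x · k) (hx · k)
    _ = ∑ a, ∑ b, H a b * A a b := by
        simp only [hA, Finset.mul_sum]
        rw [Finset.sum_comm]
        exact Finset.sum_congr rfl fun a _ => Finset.sum_comm

theorem trace_vecMulVec_self_mul_vecMulVec_self {n R : Type*} [Fintype n] [CommSemiring R]
    (u v : n → R) : trace (vecMulVec u u * vecMulVec v v) = (u ⬝ᵥ v) ^ 2 := by
  rw [vecMulVec_mul_vecMulVec, trace_vecMulVec, dotProduct_smul, smul_eq_mul, sq]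

theorem completelyPSD_of_sq_dotProduct {n d : ℕ} (hd : 1 ≤ d) (A : Matrix (Fin n) (Fin n) ℝ)
    (u : Fin n → Fin d → ℝ) (hA : ∀ i j, A i j = (u i ⬝ᵥ u j) ^ 2) : CompletelyPSD A :=
  ⟨d, fun i => vecMulVec (u i) (u i), hd,
    fun i => by simpa using posSemidef_vecMulVec_self_star (u i),
    fun i j => by rw [trace_vecMulVec_self_mul_vecMulVec_self, hA]⟩

theorem Mcirc_apply (b c : ℝ) (i j : Fin 5) :
    Mcirc b c i j = if i - j = 0 then 1 else if i - j = 1 ∨ i - j = 4 then b else c := by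
  simp only [Mcirc, of_apply, sub_eq_zero]

theorem cos_two_pi_div_five : cos (2 * π / 5) = (√5 - 1) / 4 := by
  rw [show 2 * π / 5 = 2 * (π / 5) by ring, cos_two_mul, cos_pi_div_five]
  nlinarith [sq_sqrt (show (0 : ℝ) ≤ 5 by norm_num)]

theorem cos_sq_two_pi_div_five : cos (2 * π / 5) ^ 2 = (3 - √5) / 8 := by
  rw [cos_two_pi_div_five]
  nlinarith [sq_sqrt (show (0 : ℝ) ≤ 5 by norm_num)]

theorem cos_sq_four_pi_div_five : cos (4 * π / 5) ^ 2 = (3 + √5) / 8 := by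
  rw [cos_sq, show 2 * (4 * π / 5) = 2 * π - 2 * π / 5 by ring, cos_two_pi_sub,
    cos_two_pi_div_five]
  ring

theorem cos_sq_four_pi_mul_div_five_sub (i j : Fin 5) :
    cos (4 * π * i / 5 - 4 * π * j / 5) ^ 2 = cos (4 * π * (i - j : Fin 5) / 5) ^ 2 := by
  rcases le_or_gt j i with h | h
  · rw [Fin.coe_sub_iff_le.2 h, Nat.cast_sub h]
    ring_nf
  · rw [Fin.coe_sub_iff_lt.2 h, Nat.cast_sub (by omega), Nat.cast_add, Nat.cast_ofNat,
      show 4 * π * (5 + i - j) / 5 = 4 * π * i / 5 - 4 * π * j / 5 + (2 : ℕ) * (2 * π) by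
        push_cast; ring,
      cos_add_nat_mul_two_pi]

theorem Lmat_apply (i j : Fin 5) : Lmat i j = cos (4 * π * (i - j : Fin 5) / 5) ^ 2 := by
  rw [Lmat, Mcirc_apply]
  generalize i - j = d
  fin_cases d
  · simp
  · simp
  · simp [show 4 * π * 2 / 5 = 2 * π - 2 * π / 5 by ring, cos_two_pi_sub]
  · simp [show 4 * π * 3 / 5 = 2 * π / 5 + 2 * π by ring, cos_add_two_pi]
  · simp [show 4 * π * 4 / 5 = -(4 * π / 5) + 2 * π + 2 * π by ring, cos_add_two_pi]

noncomputable def rootVec (i : Fin 5) : Fin 2 → ℝ :=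
  ![cos (4 * π * i / 5), sin (4 * π * i / 5)]

theorem rootVec_dotProduct (i j : Fin 5) :
    rootVec i ⬝ᵥ rootVec j = cos (4 * π * i / 5 - 4 * π * j / 5) := by
  simp [rootVec, dotProduct, Fin.sum_univ_two, cos_sub]

theorem completelyPSD_Lmat : CompletelyPSD Lmat :=
  completelyPSD_of_sq_dotProduct one_le_two Lmat rootVec fun i j => by
    rw [Lmat_apply, rootVec_dotProduct, cos_sq_four_pi_mul_div_five_sub]

theorem cc_le_Lmat (a b : Fin 5) : cc ≤ Lmat a b := by
  have h5 : 0 ≤ √5 := sqrt_nonneg 5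
  have h5' : √5 ≤ 3 := by nlinarith [sq_sqrt (show (0 : ℝ) ≤ 5 by norm_num)]
  rw [Lmat, Mcirc_apply, cc, cos_sq_two_pi_div_five, cos_sq_four_pi_div_five]
  split_ifs <;> linarith

theorem Lmat_add_smul_nonneg {S : Matrix (Fin 5) (Fin 5) ℝ} (hS : ∀ a b, -1 ≤ S a b)
    (a b : Fin 5) : 0 ≤ (Lmat + cc • S) a b := by
  have hcc : 0 ≤ cc := sq_nonneg _
  rw [Matrix.add_apply, Matrix.smul_apply, smul_eq_mul]
  nlinarith [cc_le_Lmat a b, hS a b]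

-- The five index pairs are distinct, so no off-diagonal entry collects two `-1`s.
theorem neg_one_le_Fm_partial_sums (a b : Fin 5) :
    -1 ≤ Fm 0 2 a b ∧
    -1 ≤ (Fm 0 2 + Fm 1 3) a b ∧
    -1 ≤ (Fm 0 2 + Fm 1 3 + Fm 2 4) a b ∧
    -1 ≤ (Fm 0 2 + Fm 1 3 + Fm 2 4 + Fm 0 3) a b ∧
    -1 ≤ (Fm 0 2 + Fm 1 3 + Fm 2 4 + Fm 0 3 + Fm 1 4) a b := by
  fin_cases a <;> fin_cases b <;> simp [Fm] <;> norm_num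

theorem Fm_eq_vecMulVec {i j : Fin 5} (hij : i ≠ j) :
    Fm i j = vecMulVec (Pi.single i 1 - Pi.single j 1) (Pi.single i 1 - Pi.single j 1) := by
  ext a b
  simp only [Fm, of_apply, vecMulVec_apply, Pi.sub_apply, Pi.single_apply]
  split_ifs <;> simp_all

theorem sum_mul_Fm (A : Matrix (Fin 5) (Fin 5) ℝ) {i j : Fin 5} (hij : i ≠ j) :
    ∑ a, ∑ b, A a b * Fm i j a b = A i i + A j j - A i j - A j i := by
  simp [Fm_eq_vecMulVec hij, vecMulVec_apply, mul_sub, Finset.sum_sub_distrib, Pi.single_apply]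
  ring

theorem sum_Mcirc_mul_Mcirc (b c b' c' : ℝ) :
    ∑ a, ∑ a', Mcirc b c a a' * Mcirc b' c' a a' = 5 * (1 + 2 * b * b' + 2 * c * c') := by
  simp +decide [Mcirc, Fin.sum_univ_five]
  ring

theorem copositive_horn : Copositive (Mcirc (-1) 1) := by
  intro v hv
  -- Two certificates, exchanged by the reflection `0 ↔ 2, 3 ↔ 4` of the 5-cycle.
  have hQ₁ : ∑ a, ∑ b, Mcirc (-1) 1 a b * (v a * v b)
      = (v 0 - v 1 + v 2 - v 3 + v 4) ^ 2 + 4 * v 0 * (v 3 - v 4) + 4 * v 1 * v 4 := by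
    simp +decide [Mcirc, Fin.sum_univ_five]
    ring
  have hQ₂ : ∑ a, ∑ b, Mcirc (-1) 1 a b * (v a * v b)
      = (v 2 - v 1 + v 0 - v 4 + v 3) ^ 2 + 4 * v 2 * (v 4 - v 3) + 4 * v 1 * v 3 := by
    simp +decide [Mcirc, Fin.sum_univ_five]
    ring
  rcases le_total (v 4) (v 3) with h | h
  · rw [hQ₁]
    have := mul_nonneg (hv 0) (sub_nonneg.2 h)
    have := mul_nonneg (hv 1) (hv 4)
    nlinarith [sq_nonneg (v 0 - v 1 + v 2 - v 3 + v 4)]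
  · rw [hQ₂]
    have := mul_nonneg (hv 2) (sub_nonneg.2 h)
    have := mul_nonneg (hv 1) (hv 3)
    nlinarith [sq_nonneg (v 2 - v 1 + v 0 - v 4 + v 3)]

theorem sum_horn_mul_Fm {i j : Fin 5} (h : i - j = 2 ∨ i - j = 3) :
    ∑ a, ∑ b, Mcirc (-1) 1 a b * Fm i j a b = 0 := by
  have hij : i ≠ j := by rintro rfl; simp at h
  have hji : j - i = 3 ∨ j - i = 2 := by
    rw [← neg_sub i j]
    rcases h with h | h <;> simp [h] <;> decide
  rw [sum_mul_Fm _ hij]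
  rcases h with h | h <;> rcases hji with h' | h' <;> simp [Mcirc_apply, h, h']

theorem sum_horn_mul_Lmat' : ∑ a, ∑ b, Mcirc (-1) 1 a b * Lmat' a b = 5 * (2 - √5) / 2 := by
  calc ∑ a, ∑ b, Mcirc (-1) 1 a b * Lmat' a b
      = ∑ a, ∑ b, Mcirc (-1) 1 a b * Lmat a b + cc * (
          ∑ a, ∑ b, Mcirc (-1) 1 a b * Fm 0 2 a b + ∑ a, ∑ b, Mcirc (-1) 1 a b * Fm 1 3 a b +
          ∑ a, ∑ b, Mcirc (-1) 1 a b * Fm 2 4 a b + ∑ a, ∑ b, Mcirc (-1) 1 a b * Fm 0 3 a b +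
          ∑ a, ∑ b, Mcirc (-1) 1 a b * Fm 1 4 a b) := by
        simp only [Lmat', Matrix.add_apply, Matrix.smul_apply, smul_eq_mul, mul_add,
          Finset.sum_add_distrib, mul_left_comm _ cc, ← Finset.mul_sum]
    _ = ∑ a, ∑ b, Mcirc (-1) 1 a b * Lmat a b := by
        rw [sum_horn_mul_Fm (i := 0) (j := 2) (by decide),
          sum_horn_mul_Fm (i := 1) (j := 3) (by decide),
          sum_horn_mul_Fm (i := 2) (j := 4) (by decide),
          sum_horn_mul_Fm (i := 0) (j := 3) (by decide),
          sum_horn_mul_Fm (i := 1) (j := 4) (by decide)]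
        ring
    _ = 5 * (2 - √5) / 2 := by
        rw [Lmat, sum_Mcirc_mul_Mcirc, cos_sq_four_pi_div_five, cos_sq_two_pi_div_five]
        ring

/-- `⟨H,L'⟩ = 5(2−√5)/2 < 0`, hence `L'` is not completely positive, even though `L` is
completely positive semidefinite and every partial sum in the definition of `L'` is
entrywise nonnegative. -/
theorem Lprime_not_cp :
    CompletelyPSD Lmat ∧
    (∀ a b, 0 ≤ (Lmat + cc • Fm 0 2) a b) ∧
    (∀ a b, 0 ≤ (Lmat + cc • (Fm 0 2 + Fm 1 3)) a b) ∧
    (∀ a b, 0 ≤ (Lmat + cc • (Fm 0 2 + Fm 1 3 + Fm 2 4)) a b) ∧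
    (∀ a b, 0 ≤ (Lmat + cc • (Fm 0 2 + Fm 1 3 + Fm 2 4 + Fm 0 3)) a b) ∧
    (∀ a b, 0 ≤ Lmat' a b) ∧
    (∑ a : Fin 5, ∑ b : Fin 5, Mcirc (-1) 1 a b * Lmat' a b) = 5 * (2 - Real.sqrt 5) / 2 ∧
    (∑ a : Fin 5, ∑ b : Fin 5, Mcirc (-1) 1 a b * Lmat' a b) < 0 ∧
    ¬ CompletelyPositive Lmat' := by
  have hneg : ∑ a, ∑ b, Mcirc (-1) 1 a b * Lmat' a b < 0 := by
    have : 2 < √5 := by rw [lt_sqrt zero_le_two]; norm_num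
    rw [sum_horn_mul_Lmat']
    linarith
  refine ⟨completelyPSD_Lmat,
    Lmat_add_smul_nonneg fun a b => (neg_one_le_Fm_partial_sums a b).1,
    Lmat_add_smul_nonneg fun a b => (neg_one_le_Fm_partial_sums a b).2.1,
    Lmat_add_smul_nonneg fun a b => (neg_one_le_Fm_partial_sums a b).2.2.1,
    Lmat_add_smul_nonneg fun a b => (neg_one_le_Fm_partial_sums a b).2.2.2.1,
    Lmat_add_smul_nonneg fun a b => (neg_one_le_Fm_partial_sums a b).2.2.2.2,
    sum_horn_mul_Lmat', hneg, fun hcp => hneg.not_ge (hcp.sum_mul_nonneg copositive_horn)⟩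
end
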